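/- (Conditional Wald identity.) In the IV setup, let u ∈ 𝒰 satisfy P(T = 1, U = u) > 0, P(T = 0, U = u) > 0, and the strict relevance condition P(T̃_{1,u} = 1) > P(T̃_{0,u} = 1). Then P(T̃_{1,u} = 1, T̃_{0,u} = 0) > 0 and the conditional local average treatment effect at u is identified by the Wald ratio: E[Y_{1,u} − Y_{0,u} ∣ T̃_{1,u} = 1, T̃_{0,u} = 0] = (E[Y ∣ T = 1, U = u] − E[Y ∣ T = 0, U = u]) / (E[T̃ ∣ T = 1, U = u] − E[T̃ ∣ T = 0, U = u]). -/

import Mathlib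

/-!
Conditioning on an arm `{T = t, U = u}` of the instrument, the observed outcome is the potential
outcome `Y_{T̃_{t,u}, u}`, and by unconfoundedness the arm is independent of the potential
variables, so `E[Y ∣ T = t, U = u] = E[Y_{T̃_{t,u}, u}]` and `E[T̃ ∣ T = t, U = u] = P(T̃_{t,u} = 1)`.
By monotonicity `T̃_{0,u} ≤ T̃_{1,u}`, so the two arms differ exactly on the compliers
`{T̃_{1,u} = 1, T̃_{0,u} = 0}`: the difference of outcome means is `E[(Y_{1,u} - Y_{0,u}) 1_compliers]`
and the difference of treatment probabilities is `P(compliers)`, which is positive by relevance.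
-/

open MeasureTheory ProbabilityTheory

/-- Conditional expectation `E[Z ∣ B] = E[Z·1_B] / P(B)`. -/
noncomputable def cexp {Ω : Type*} [MeasurableSpace Ω] (μ : Measure Ω) (Z : Ω → ℝ)
    (B : Set Ω) : ℝ :=
  (∫ ω in B, Z ω ∂μ) / (μ B).toReal

lemma Bool.cond_apply_true_false {α : Type*} (f : Bool → α) (t : Bool) :
    cond t (f true) (f false) = f t := by
  cases t <;> rfl

lemma Bool.setOf_true_subset_of_le {α : Type*} {a b : α → Bool} (hab : a ≤ b) :
    {x | a x = true} ⊆ {x | b x = true} :=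
  fun x hx => Bool.le_iff_imp.mp (hab x) hx

section

variable {Ω E : Type*} [MeasurableSpace Ω] {μ : Measure Ω} [NormedAddCommGroup E]

@[fun_prop]
lemma Measurable.cond {γ : Type*} [MeasurableSpace γ] {b : Ω → Bool} {f g : Ω → γ}
    (hb : Measurable b) (hf : Measurable f) (hg : Measurable g) :
    Measurable fun ω => cond (b ω) (f ω) (g ω) := by
  simp only [cond_eq_ite]
  exact Measurable.ite (p := fun ω => b ω = true) (hb (measurableSet_singleton true)) hf hg

lemma MeasureTheory.Integrable.cond {b : Ω → Bool} (hb : Measurable b) {x y : Ω → E}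
    (hx : Integrable x μ) (hy : Integrable y μ) :
    Integrable (fun ω => cond (b ω) (x ω) (y ω)) μ := by
  have hs := hb (measurableSet_singleton true)
  refine ((hx.indicator hs).add (hy.indicator hs.compl)).congr (ae_of_all _ fun ω => ?_)
  cases h : b ω <;> simp [h]

lemma integral_cond_one_zero {b : Ω → Bool} (hb : Measurable b) :
    ∫ ω, cond (b ω) (1 : ℝ) 0 ∂μ = μ.real {ω | b ω = true} := by
  rw [← integral_indicator_one (s := {ω | b ω = true}) (hb (measurableSet_singleton true))]
  congr 1 with ω
  cases h : b ω <;> simp [h]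

lemma integral_cond_sub_integral_cond [NormedSpace ℝ E] {a b : Ω → Bool} (hab : a ≤ b)
    (ha : Measurable a) (hb : Measurable b) {x y : Ω → E} (hx : Integrable x μ)
    (hy : Integrable y μ) :
    ∫ ω, cond (b ω) (x ω) (y ω) ∂μ - ∫ ω, cond (a ω) (x ω) (y ω) ∂μ
      = ∫ ω in {ω | b ω = true} \ {ω | a ω = true}, x ω - y ω ∂μ := by
  have hs : MeasurableSet ({ω | b ω = true} \ {ω | a ω = true}) :=
    (hb (measurableSet_singleton true)).diff (ha (measurableSet_singleton true))
  rw [← integral_sub (hx.cond hb hy) (hx.cond ha hy), ← integral_indicator hs]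
  congr 1 with ω
  have hω := Bool.le_iff_imp.mp (hab ω)
  cases ha : a ω <;> cases hb : b ω <;> simp_all

lemma cexp_congr {X X' : Ω → ℝ} {B : Set Ω} (hB : MeasurableSet B) (h : Set.EqOn X X' B) :
    cexp μ X B = cexp μ X' B := by
  rw [cexp, cexp, setIntegral_congr_fun hB h]

namespace ProbabilityTheory

variable {β : Type*} [MeasurableSpace β] {X : Ω → ℝ} {W : Ω → β}

lemma IndepFun.setIntegral_preimage (h : IndepFun X W μ) (hX : AEStronglyMeasurable X μ)
    (hW : Measurable W) {s : Set β} (hs : MeasurableSet s) :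
    ∫ ω in W ⁻¹' s, X ω ∂μ = (∫ ω, X ω ∂μ) * μ.real (W ⁻¹' s) := by
  have hind : Measurable (s.indicator (1 : β → ℝ)) := measurable_one.indicator hs
  have hprod : (W ⁻¹' s).indicator X = fun ω => X ω * s.indicator 1 (W ω) := by
    ext ω; by_cases hω : W ω ∈ s <;> simp [hω]
  rw [← integral_indicator (hW hs), hprod, ← integral_indicator_one (hW hs)]
  exact (h.comp measurable_id hind).integral_fun_mul_eq_mul_integral hX
    (hind.comp hW).aestronglyMeasurable

lemma IndepFun.cexp_preimage [IsFiniteMeasure μ] (h : IndepFun X W μ)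
    (hX : AEStronglyMeasurable X μ) (hW : Measurable W) {s : Set β} (hs : MeasurableSet s) (hpos : μ (W ⁻¹' s) ≠ 0) :
    cexp μ X (W ⁻¹' s) = ∫ ω, X ω ∂μ := by
  rw [cexp, h.setIntegral_preimage hX hW hs, measureReal_def,
    mul_div_cancel_right₀ _ (ENNReal.toReal_ne_zero.mpr ⟨hpos, measure_ne_top μ _⟩)]

end ProbabilityTheory

end

def potentials {Ω 𝒰 : Type*} (Ypo : Bool → 𝒰 → Ω → ℝ) (Ttil : Bool → 𝒰 → Ω → Bool) (u : 𝒰)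
    (ω : Ω) : ℝ × ℝ × Bool × Bool :=
  (Ypo false u ω, Ypo true u ω, Ttil false u ω, Ttil true u ω)

section InstrumentalVariables

variable {Ω 𝒰 : Type*} [MeasurableSpace Ω] [MeasurableSpace 𝒰] [MeasurableSingletonClass 𝒰]
  {μ : Measure Ω} [IsFiniteMeasure μ] {T : Ω → Bool} {U : Ω → 𝒰}
  {Ttil : Bool → 𝒰 → Ω → Bool} {Ypo : Bool → 𝒰 → Ω → ℝ} {u : 𝒰} {t : Bool}

lemma cexp_arm_eq_integral_potentials (hT : Measurable T) (hU : Measurable U)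
    (hTtil : ∀ t u, Measurable (Ttil t u)) (hYpo : ∀ t u, Measurable (Ypo t u))
    (hunconf : IndepFun (potentials Ypo Ttil u) (fun ω => (T ω, U ω)) μ)
    (hpos : μ ({ω | T ω = t} ∩ {ω | U ω = u}) ≠ 0) {φ : ℝ × ℝ × Bool × Bool → ℝ}
    (hφ : Measurable φ) {X : Ω → ℝ}
    (hX : ∀ ω, T ω = t → U ω = u → X ω = φ (potentials Ypo Ttil u ω)) :
    cexp μ X ({ω | T ω = t} ∩ {ω | U ω = u}) = ∫ ω, φ (potentials Ypo Ttil u ω) ∂μ := by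
  have hpre : {ω | T ω = t} ∩ {ω | U ω = u} = (fun ω => (T ω, U ω)) ⁻¹' {(t, u)} := by
    ext; simp
  have hmeas : MeasurableSet ({ω | T ω = t} ∩ {ω | U ω = u}) :=
    (hT (measurableSet_singleton t)).inter (hU (measurableSet_singleton u))
  rw [cexp_congr hmeas fun ω hω => hX ω hω.1 hω.2, hpre]
  rw [hpre] at hpos
  exact (hunconf.comp hφ measurable_id).cexp_preimage
    (hφ.comp (by unfold potentials; fun_prop)).aestronglyMeasurable (hT.prodMk hU)
    (measurableSet_singleton _) hpos

lemma cexp_outcome_arm (hT : Measurable T) (hU : Measurable U)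
    (hTtil : ∀ t u, Measurable (Ttil t u)) (hYpo : ∀ t u, Measurable (Ypo t u))
    (hunconf : IndepFun (potentials Ypo Ttil u) (fun ω => (T ω, U ω)) μ)
    {Tperc : Ω → Bool} {Y : Ω → ℝ} (hTperc : ∀ ω, Tperc ω = Ttil (T ω) (U ω) ω)
    (hYobs : ∀ ω, Y ω = Ypo (Tperc ω) (U ω) ω)
    (hpos : μ ({ω | T ω = t} ∩ {ω | U ω = u}) ≠ 0) :
    cexp μ Y ({ω | T ω = t} ∩ {ω | U ω = u})
      = ∫ ω, cond (Ttil t u ω) (Ypo true u ω) (Ypo false u ω) ∂μ := by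
  refine (cexp_arm_eq_integral_potentials hT hU hTtil hYpo hunconf hpos (X := Y)
    (φ := fun p => cond (cond t p.2.2.2 p.2.2.1) p.2.1 p.1) (by fun_prop)
    fun ω hTω hUω => ?_).trans (by cases t <;> rfl)
  rw [hYobs, hTperc, hTω, hUω, ← Bool.cond_apply_true_false (Ypo · u ω) (Ttil t u ω)]
  cases t <;> rfl

lemma cexp_treatment_arm (hT : Measurable T) (hU : Measurable U)
    (hTtil : ∀ t u, Measurable (Ttil t u)) (hYpo : ∀ t u, Measurable (Ypo t u))
    (hunconf : IndepFun (potentials Ypo Ttil u) (fun ω => (T ω, U ω)) μ)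
    {Tperc : Ω → Bool} (hTperc : ∀ ω, Tperc ω = Ttil (T ω) (U ω) ω)
    (hpos : μ ({ω | T ω = t} ∩ {ω | U ω = u}) ≠ 0) :
    cexp μ (fun ω => if Tperc ω = true then (1 : ℝ) else 0) ({ω | T ω = t} ∩ {ω | U ω = u})
      = μ.real {ω | Ttil t u ω = true} := by
  rw [← integral_cond_one_zero (hTtil t u)]
  refine (cexp_arm_eq_integral_potentials hT hU hTtil hYpo hunconf hpos
    (φ := fun p => cond (cond t p.2.2.2 p.2.2.1) 1 0) (by fun_prop)
    fun ω hTω hUω => ?_).trans (by cases t <;> rfl)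
  rw [hTperc, hTω, hUω, ← cond_eq_ite]
  cases t <;> rfl

end InstrumentalVariables

theorem conditional_wald_identity_general
    {Ω 𝒰 : Type*} [MeasurableSpace Ω] (μ : Measure Ω) [IsProbabilityMeasure μ]
    [MeasurableSpace 𝒰] [MeasurableSingletonClass 𝒰]
    (T : Ω → Bool) (U : Ω → 𝒰)
    (Ttil : Bool → 𝒰 → Ω → Bool) (Ypo : Bool → 𝒰 → Ω → ℝ)
    (Tperc : Ω → Bool) (Y : Ω → ℝ)
    (hT : Measurable T) (hU : Measurable U)
    (hTtil : ∀ (t : Bool) (u : 𝒰), Measurable (Ttil t u))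
    (hYpo : ∀ (t : Bool) (u : 𝒰), Measurable (Ypo t u))
    (hbdd : ∃ C : ℝ, ∀ (t : Bool) (u : 𝒰) (ω : Ω), |Ypo t u ω| ≤ C)
    (hTperc : ∀ ω, Tperc ω = Ttil (T ω) (U ω) ω)
    (hYobs : ∀ ω, Y ω = Ypo (Tperc ω) (U ω) ω)
    (hunconf : ∀ u : 𝒰,
      IndepFun (fun ω => (Ypo false u ω, Ypo true u ω, Ttil false u ω, Ttil true u ω))
        (fun ω => (T ω, U ω)) μ)
    (hmono : ∀ (u : 𝒰) (ω : Ω), Ttil false u ω ≤ Ttil true u ω) :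
    ∀ u : 𝒰, 0 < μ ({ω | T ω = true} ∩ {ω | U ω = u}) →
      0 < μ ({ω | T ω = false} ∩ {ω | U ω = u}) →
      μ {ω | Ttil false u ω = true} < μ {ω | Ttil true u ω = true} →
      0 < μ {ω | Ttil true u ω = true ∧ Ttil false u ω = false} ∧
      cexp μ (fun ω => Ypo true u ω - Ypo false u ω)
          {ω | Ttil true u ω = true ∧ Ttil false u ω = false}
        = (cexp μ Y ({ω | T ω = true} ∩ {ω | U ω = u})
              - cexp μ Y ({ω | T ω = false} ∩ {ω | U ω = u}))
          / (cexp μ (fun ω => if Tperc ω = true then (1 : ℝ) else 0)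
                ({ω | T ω = true} ∩ {ω | U ω = u})
              - cexp μ (fun ω => if Tperc ω = true then (1 : ℝ) else 0)
                  ({ω | T ω = false} ∩ {ω | U ω = u})) := by
  intro u hp1 hp0 hlt
  obtain ⟨C, hC⟩ := hbdd
  have hYint : ∀ t, Integrable (Ypo t u) μ := fun t =>
    Integrable.of_bound (hYpo t u).aestronglyMeasurable C (ae_of_all _ (hC t u))
  have hcompliers : {ω | Ttil true u ω = true ∧ Ttil false u ω = false}
      = {ω | Ttil true u ω = true} \ {ω | Ttil false u ω = true} := by
    ext; simp
  refine ⟨hcompliers ▸ (tsub_pos_of_lt hlt).trans_le le_measure_sdiff, ?_⟩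
  rw [cexp_outcome_arm hT hU hTtil hYpo (hunconf u) hTperc hYobs hp1.ne',
    cexp_outcome_arm hT hU hTtil hYpo (hunconf u) hTperc hYobs hp0.ne',
    cexp_treatment_arm hT hU hTtil hYpo (hunconf u) hTperc hp1.ne',
    cexp_treatment_arm hT hU hTtil hYpo (hunconf u) hTperc hp0.ne',
    integral_cond_sub_integral_cond (hmono u) (hTtil _ _) (hTtil _ _) (hYint true) (hYint false),
    ← measureReal_sdiff (Bool.setOf_true_subset_of_le (hmono u))
      (hTtil false u (measurableSet_singleton true)), ← hcompliers]
  rfl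

/-- Conditional Wald identity: in the IV setup, if `P(T = 1, U = u) > 0`,
`P(T = 0, U = u) > 0` and `P(T̃_{1,u} = 1) > P(T̃_{0,u} = 1)`, then
`P(T̃_{1,u} = 1, T̃_{0,u} = 0) > 0` and the conditional LATE at `u` is identified
by the Wald ratio. -/
theorem conditional_wald_identity
    {Ω 𝒰 : Type*} [MeasurableSpace Ω] (μ : Measure Ω) [IsProbabilityMeasure μ]
    [Countable 𝒰] [MeasurableSpace 𝒰] [MeasurableSingletonClass 𝒰]
    (T : Ω → Bool) (U : Ω → 𝒰)
    (Ttil : Bool → 𝒰 → Ω → Bool) (Ypo : Bool → 𝒰 → Ω → ℝ)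
    (Tperc : Ω → Bool) (Y : Ω → ℝ)
    (hT : Measurable T) (hU : Measurable U)
    (hTtil : ∀ (t : Bool) (u : 𝒰), Measurable (Ttil t u))
    (hYpo : ∀ (t : Bool) (u : 𝒰), Measurable (Ypo t u))
    (hbdd : ∃ C : ℝ, ∀ (t : Bool) (u : 𝒰) (ω : Ω), |Ypo t u ω| ≤ C)
    (hTperc : ∀ ω, Tperc ω = Ttil (T ω) (U ω) ω)
    (hYobs : ∀ ω, Y ω = Ypo (Tperc ω) (U ω) ω)
    (hunconf : ∀ u : 𝒰,
      IndepFun (fun ω => (Ypo false u ω, Ypo true u ω, Ttil false u ω, Ttil true u ω))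
        (fun ω => (T ω, U ω)) μ)
    (hmono : ∀ (u : 𝒰) (ω : Ω), Ttil false u ω ≤ Ttil true u ω) :
    ∀ u : 𝒰, 0 < μ ({ω | T ω = true} ∩ {ω | U ω = u}) →
      0 < μ ({ω | T ω = false} ∩ {ω | U ω = u}) →
      μ {ω | Ttil false u ω = true} < μ {ω | Ttil true u ω = true} →
      0 < μ {ω | Ttil true u ω = true ∧ Ttil false u ω = false} ∧
      cexp μ (fun ω => Ypo true u ω - Ypo false u ω)
          {ω | Ttil true u ω = true ∧ Ttil false u ω = false}
        = (cexp μ Y ({ω | T ω = true} ∩ {ω | U ω = u})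
              - cexp μ Y ({ω | T ω = false} ∩ {ω | U ω = u}))
          / (cexp μ (fun ω => if Tperc ω = true then (1 : ℝ) else 0)
                ({ω | T ω = true} ∩ {ω | U ω = u})
              - cexp μ (fun ω => if Tperc ω = true then (1 : ℝ) else 0)
                  ({ω | T ω = false} ∩ {ω | U ω = u})) :=
  conditional_wald_identity_general μ T U Ttil Ypo Tperc Y hT hU hTtil hYpo hbdd hTperc hYobs
    hunconf hmono
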